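/- Let K, m, n be positive integers, let ω : [0,1]² → [0,1] be measurable, let ξ_1,…,ξ_m and ζ_1,…,ζ_n be i.i.d. Uniform(0,1) random variables, and set W_{ij} = ω(ξ_i, ζ_j). Let I ⊂ {1,…,m} and J ⊂ {1,…,n} be uniformly random subsets of deterministic sizes |I| ≥ 1 and |J| ≥ 1, sampled without replacement and independent of (ξ,ζ). Fix Γ ∈ [−1,1]^{K×K} and (μ,ν) ∈ Ω_m × Ω_n, and for (Q,R) ∈ Q_μ^m × Q_ν^n let Ŝ^R ∈ argmax_{S∈Q_μ^m} Σ_{i=1}^m Σ_{j∈J} W_{ij} Γ_{S(i)R(j)} and T̂^Q ∈ argmax_{T∈Q_ν^n} Σ_{i∈I} Σ_{j=1}^n W_{ij} Γ_{Q(i)T(j)} (measurably chosen maximizers). Then E[ h_{F^W_{μν}}(Γ) ] ≤ E[ max_{(Q,R)∈Q_μ^m×Q_ν^n} ⟨Γ, W/Ŝ^R T̂^Q⟩ ] + K √(2π) ( |I|^{−1/2} + |J|^{−1/2} ). -/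

import Mathlib

open MeasureTheory Finset Set

namespace CoCluster

noncomputable section

/-- The uniform distribution on `[0,1]`. -/
def unif : Measure ℝ := volume.restrict (Set.Icc (0:ℝ) 1)

instance : IsProbabilityMeasure unif := by
  constructor
  simp [unif, Real.volume_Icc]

/-- Canonical sample space carrying `ξ ∈ [0,1]^m`, `ζ ∈ [0,1]^n`, and auxiliary
uniform variables `u ∈ [0,1]^{m×n}` used to generate the conditionally
independent Bernoulli entries. -/
abbrev Sample (m n : ℕ) : Type :=
  (Fin m → ℝ) × (Fin n → ℝ) × (Fin m → Fin n → ℝ)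

/-- The canonical probability measure: everything i.i.d. uniform on `[0,1]`. -/
def pspace (m n : ℕ) : Measure (Sample m n) :=
  (Measure.pi fun _ : Fin m => unif).prod
    ((Measure.pi fun _ : Fin n => unif).prod
      (Measure.pi fun _ : Fin m => Measure.pi fun _ : Fin n => unif))

variable {m n K : ℕ}

/-- The random binary array `A` generated from `ω`:  conditionally on `(ξ,ζ)`,
the entries are independent `Bernoulli (ω (ξ i) (ζ j))`. -/
def Arand (ω : ℝ → ℝ → ℝ) (p : Sample m n) : Fin m → Fin n → ℝ :=
  fun i j => if p.2.2 i j ≤ ω (p.1 i) (p.2.1 j) then 1 else 0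

/-- The random matrix `W i j = ω (ξ i) (ζ j)`. -/
def Wrand (ω : ℝ → ℝ → ℝ) (p : Sample m n) : Fin m → Fin n → ℝ :=
  fun i j => ω (p.1 i) (p.2.1 j)

/-- `⟨Γ, F⟩ = tr (Γᵀ F)`. -/
def matInner (Γ F : Fin K → Fin K → ℝ) : ℝ := ∑ a, ∑ b, Γ a b * F a b

/-- The co-clustering quotient `(A/ST)_{ab}` of a matrix. -/
def quotM (A : Fin m → Fin n → ℝ) (S : Fin m → Fin K) (T : Fin n → Fin K) :
    Fin K → Fin K → ℝ :=
  fun a b => (1 / (m * n : ℝ)) * ∑ i, ∑ j, if S i = a ∧ T j = b then A i j else 0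

/-- The co-clustering quotient `(ω/στ)_{ab}` of a kernel `ω : [0,1]² → [0,1]`. -/
def quotW (ω : ℝ → ℝ → ℝ) (σ τ : ℝ → Fin K) : Fin K → Fin K → ℝ :=
  fun a b => ∫ x in Set.Icc (0:ℝ) 1, ∫ y in Set.Icc (0:ℝ) 1,
    (if σ x = a ∧ τ y = b then ω x y else 0)

/-- `Ω_m`: probability vectors with entries that are integer multiples of `1/m`. -/
def OmegaSet (m K : ℕ) : Set (Fin K → ℝ) :=
  {μ | (∑ a, μ a) = 1 ∧ ∀ a, ∃ k : ℕ, μ a = (k : ℝ) / m}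

/-- `Q_μ^m`: class assignments on `{1,…,m}` with class proportions `μ`. -/
def QmSet (m : ℕ) (μ : Fin K → ℝ) : Set (Fin m → Fin K) :=
  {S | ∀ a, ((univ.filter fun i => S i = a).card : ℝ) = m * μ a}

/-- `Q_μ`: measurable partitions of `[0,1]` with class proportions `μ`. -/
def QSet (μ : Fin K → ℝ) : Set (ℝ → Fin K) :=
  {σ | Measurable σ ∧ ∀ a, (volume (σ ⁻¹' {a} ∩ Set.Icc (0:ℝ) 1)).toReal = μ a}

/-- `F^A_{μν}`: the set of admissible co-clusterings of a matrix. -/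
def FMat (A : Fin m → Fin n → ℝ) (μ ν : Fin K → ℝ) : Set (Fin K → Fin K → ℝ) :=
  {F | ∃ S ∈ QmSet m μ, ∃ T ∈ QmSet n ν, F = quotM A S T}

/-- `F^ω_{μν}`: the set of admissible co-clusterings of a kernel. -/
def FCont (ω : ℝ → ℝ → ℝ) (μ ν : Fin K → ℝ) : Set (Fin K → Fin K → ℝ) :=
  {F | ∃ σ ∈ QSet μ, ∃ τ ∈ QSet ν, F = quotW ω σ τ}

/-- Support function `h_F(Γ) = sup_{F' ∈ F} ⟨Γ, F'⟩`. -/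
def suppFn (F : Set (Fin K → Fin K → ℝ)) (Γ : Fin K → Fin K → ℝ) : ℝ :=
  sSup ((fun M => matInner Γ M) '' F)

/-- Co-blockmodel parameter triples `φ = (μ, ν, θ)`. -/
abbrev Params (K : ℕ) : Type :=
  (Fin K → ℝ) × (Fin K → ℝ) × (Fin K → Fin K → ℝ)

/-- `Φ = Ω_m × Ω_n × [0,1]^{K×K}`. -/
def PhiSet (m n K : ℕ) : Set (Params K) :=
  {φ | φ.1 ∈ OmegaSet m K ∧ φ.2.1 ∈ OmegaSet n K ∧
    ∀ a b, φ.2.2 a b ∈ Set.Icc (0:ℝ) 1}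

/-- Inverse distribution function `F_μ⁻¹` of a distribution on `{1,…,K}`. -/
def invCDF [NeZero K] (μ : Fin K → ℝ) (x : ℝ) : Fin K :=
  if h : (univ.filter fun a : Fin K =>
      x ≤ ∑ b ∈ univ.filter (· ≤ a), μ b).Nonempty
  then (univ.filter fun a : Fin K =>
      x ≤ ∑ b ∈ univ.filter (· ≤ a), μ b).min' h
  else ⟨0, Nat.pos_of_ne_zero (NeZero.ne K)⟩

/-- The blockmodel function `ω_φ(x,y) = θ_{F_μ⁻¹(x) F_ν⁻¹(y)}`. -/
def omegaPhi [NeZero K] (φ : Params K) (x y : ℝ) : ℝ :=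
  φ.2.2 (invCDF φ.1 x) (invCDF φ.2.1 y)

/-- Measure-preserving bijections of `[0,1]`. -/
def MPB (π : ℝ → ℝ) : Prop :=
  Set.BijOn π (Set.Icc (0:ℝ) 1) (Set.Icc (0:ℝ) 1) ∧
    MeasurePreserving π unif unif

/-- The `L²` risk `R_ω(φ)`. -/
def Rrisk [NeZero K] (ω : ℝ → ℝ → ℝ) (φ : Params K) : ℝ :=
  sInf {r | ∃ π₁ π₂ : ℝ → ℝ, MPB π₁ ∧ MPB π₂ ∧
    r = ∫ x in Set.Icc (0:ℝ) 1, ∫ y in Set.Icc (0:ℝ) 1,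
      (ω (π₁ x) (π₂ y) - omegaPhi φ x y) ^ 2}

/-- The least squares objective `R_A(φ)`. -/
def RA (A : Fin m → Fin n → ℝ) (φ : Params K) : ℝ :=
  sInf {r | ∃ S ∈ QmSet m φ.1, ∃ T ∈ QmSet n φ.2.1,
    r = (1 / (m * n : ℝ)) * ∑ i, ∑ j, (φ.2.2 (S i) (T j) - A i j) ^ 2}

/-- The log-likelihood functional `L_ω(φ)`. -/
def Lfun [NeZero K] (ω : ℝ → ℝ → ℝ) (φ : Params K) : ℝ :=
  sSup {r | ∃ π₁ π₂ : ℝ → ℝ, MPB π₁ ∧ MPB π₂ ∧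
    r = ∫ x in Set.Icc (0:ℝ) 1, ∫ y in Set.Icc (0:ℝ) 1,
      (ω (π₁ x) (π₂ y) * Real.log (omegaPhi φ x y)
        + (1 - ω (π₁ x) (π₂ y)) * Real.log (1 - omegaPhi φ x y))}

/-- The profile likelihood objective `L_A(φ)`. -/
def LA (A : Fin m → Fin n → ℝ) (φ : Params K) : ℝ :=
  sSup {r | ∃ S ∈ QmSet m φ.1, ∃ T ∈ QmSet n φ.2.1,
    r = (1 / (m * n : ℝ)) * ∑ i, ∑ j,
      (A i j * Real.log (φ.2.2 (S i) (T j))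
        + (1 - A i j) * Real.log (1 - φ.2.2 (S i) (T j)))}

/-- `B(φ) = max_{a,b} |log (θ_{ab}/(1-θ_{ab}))|`. -/
def Bfn (θ : Fin K → Fin K → ℝ) : ℝ :=
  sSup {x | ∃ a b, x = |Real.log (θ a b / (1 - θ a b))|}

end

end CoCluster

open CoCluster MeasureTheory Set Finset

open scoped BigOperators

/-!
Fix `W` and an admissible pair `(S, T)`. Given a column sample `J` and a row sample `I`, replace `S`
by `Ŝ = Ŝ^T` (the best rows against `T`, judged on the columns in `J`), and then `T` by `T̂ = T̂^Ŝ`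
(the best columns against `Ŝ`, judged on the rows in `I`); taking `(Q, R) = (Ŝ, T)` shows that
`⟨Γ, W/ŜT̂⟩` is at most the maximum on the right-hand side. Each replacement loses at most the gap
between a full mean and a sample mean of numbers in `[-1, 1]`, summed over the `K` classes. For a
uniform sample of size `k` drawn without replacement all pairs of indices are included equally
often, so this gap has second moment at most `1/k` and mean at most `k^{-1/2}`. Averaging over `I`
and `J` and integrating gives the bound with `K (|I|^{-1/2} + |J|^{-1/2})`, and `√(2π) ≥ 1`.
-/

section Sampling

variable {ι : Type*} [Fintype ι]

lemma card_filter_mem_powersetCard [DecidableEq ι] (j : ι) {k : ℕ} (hk : 1 ≤ k) :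
    #{J ∈ powersetCard k univ | j ∈ J} = (Fintype.card ι - 1).choose (k - 1) := by
  simp_rw [← Finset.singleton_subset_iff]
  rw [card_filter_powersetCard_subset _ _ _ (subset_univ _) (by simpa using hk)]
  simp

lemma card_filter_pair_subset_powersetCard [DecidableEq ι] {j j' : ι} (hjj' : j ≠ j') (k : ℕ) :
    #{J ∈ powersetCard k univ | {j, j'} ⊆ J}
      = if 2 ≤ k then (Fintype.card ι - 2).choose (k - 2) else 0 := by
  split_ifs with hk
  · rw [card_filter_powersetCard_subset _ _ _ (subset_univ _) (by rwa [card_pair hjj'])]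
    simp [card_pair hjj']
  · rw [card_eq_zero, filter_eq_empty_iff]
    intro J hJ hsub
    have := Finset.card_le_card hsub
    rw [card_pair hjj', mem_powersetCard_univ.1 hJ] at this
    omega

lemma choose_mul_card_eq_card_powersetCard_mul {k : ℕ} (hk : 1 ≤ k) :
    (Fintype.card ι - 1).choose (k - 1) * Fintype.card ι
      = #(powersetCard k (univ : Finset ι)) * k := by
  classical
  rw [mul_comm, ← sum_card fun j => card_filter_mem_powersetCard j hk,
    sum_congr rfl fun J hJ => mem_powersetCard_univ.1 hJ, sum_const, smul_eq_mul]

lemma sum_powersetCard_sq_sum_le {y : ι → ℝ} (hy : ∑ j, y j = 0) {k : ℕ} (hk : 1 ≤ k) :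
    ∑ J ∈ powersetCard k univ, (∑ j ∈ J, y j) ^ 2
      ≤ (Fintype.card ι - 1).choose (k - 1) * ∑ j, y j ^ 2 := by
  classical
  set P := powersetCard k (univ : Finset ι)
  set N : ι → ι → ℝ := fun j j' => #{J ∈ P | {j, j'} ⊆ J}
  set c₂ : ℝ := ((if 2 ≤ k then (Fintype.card ι - 2).choose (k - 2) else 0 : ℕ) : ℝ)
  have hexpand : ∑ J ∈ P, (∑ j ∈ J, y j) ^ 2 = ∑ j, ∑ j', y j * y j' * N j j' := by
    have hsq : ∀ J : Finset ι, (∑ j ∈ J, y j) ^ 2 = ∑ q ∈ J ×ˢ J, y q.1 * y q.2 := fun J => by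
      rw [sq, sum_mul_sum, sum_product]
    simp_rw [hsq]
    rw [sum_comm' (t' := univ) (s' := fun q => {J ∈ P | {q.1, q.2} ⊆ J})
      (fun J q => by simp [Finset.insert_subset_iff, and_comm])]
    simp_rw [sum_const, nsmul_eq_mul, mul_comm]
    rw [← univ_product_univ, sum_product]
  -- all off-diagonal pairs are counted `c₂` times, and `∑ y = 0`
  have hrow : ∀ j, ∑ j', y j * y j' * N j j' = (N j j - c₂) * y j ^ 2 := fun j => by
    rw [← sum_erase_add _ _ (mem_univ j), sum_congr rfl fun j' hj' => by
      rw [show N j j' = c₂ from congrArg Nat.cast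
        (card_filter_pair_subset_powersetCard (ne_of_mem_erase hj').symm k)]]
    rw [← sum_mul, ← mul_sum, sum_erase_eq_sub (mem_univ j), hy]
    ring
  have hdiag : ∀ j, N j j = (Fintype.card ι - 1).choose (k - 1) := fun j => by
    simp only [N, P, Finset.pair_eq_singleton, Finset.singleton_subset_iff]
    exact_mod_cast card_filter_mem_powersetCard j hk
  have hc₂ : 0 ≤ c₂ := Nat.cast_nonneg _
  have hy2 : 0 ≤ ∑ j, y j ^ 2 := sum_nonneg fun j _ => sq_nonneg _
  rw [hexpand, sum_congr rfl fun j _ => by rw [hrow j, hdiag j], ← mul_sum]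
  nlinarith

noncomputable def sampleDev (x : ι → ℝ) (J : Finset ι) : ℝ := 𝔼 j, x j - 𝔼 j ∈ J, x j

lemma expect_abs_sampleDev_le {x : ι → ℝ} (hx : ∀ j, |x j| ≤ 1) {k : ℕ} (hk : 1 ≤ k) :
    𝔼 J ∈ powersetCard k univ, |sampleDev x J| ≤ (√k)⁻¹ := by
  set P := powersetCard k (univ : Finset ι)
  rcases P.eq_empty_or_nonempty with hP | hP
  · rw [hP, expect_empty]; positivity
  set n := Fintype.card ι
  set y : ι → ℝ := fun j => x j - 𝔼 i, x i
  have hxbar : ∑ j, x j = n * 𝔼 i, x i := (Fintype.card_mul_expect x).symm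
  have hy : ∑ j, y j = 0 := by
    simp only [y, sum_sub_distrib, sum_const, card_univ, nsmul_eq_mul, hxbar]
    exact sub_self _
  have hdev : ∀ J ∈ P, sampleDev x J = -((k : ℝ)⁻¹ * ∑ j ∈ J, y j) := fun J hJ => by
    have hJk : (#J : ℝ) = k := by exact_mod_cast mem_powersetCard_univ.1 hJ
    simp only [sampleDev, y, sum_sub_distrib, sum_const, nsmul_eq_mul, hJk,
      expect_eq_sum_div_card]
    field_simp
    ring
  have hy2 : ∑ j, y j ^ 2 ≤ n := by
    have hvar : ∑ j, y j ^ 2 = ∑ j, x j ^ 2 - n * (𝔼 i, x i) ^ 2 := by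
      simp only [y, sub_sq, sum_add_distrib, sum_sub_distrib, ← sum_mul, ← mul_sum, hxbar,
        sum_const, card_univ, nsmul_eq_mul]
      ring
    calc ∑ j, y j ^ 2 ≤ ∑ j, x j ^ 2 := by
          rw [hvar]; nlinarith [sq_nonneg (𝔼 i, x i), (Nat.cast_nonneg n : (0 : ℝ) ≤ n)]
      _ ≤ ∑ _j : ι, (1 : ℝ) := sum_le_sum fun j _ => by
          nlinarith [abs_le.1 (hx j), sq_abs (x j)]
      _ = n := by simp [n]
  have hcount : ((n - 1).choose (k - 1) : ℝ) * n = #P * k := by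
    exact_mod_cast choose_mul_card_eq_card_powersetCard_mul hk
  have hsq : 𝔼 J ∈ P, sampleDev x J ^ 2 ≤ (k : ℝ)⁻¹ := by
    have hN : (0 : ℝ) < #P := by exact_mod_cast hP.card_pos
    have hk0 : (0 : ℝ) < k := by exact_mod_cast hk
    calc 𝔼 J ∈ P, sampleDev x J ^ 2
        = (k : ℝ)⁻¹ ^ 2 * (∑ J ∈ P, (∑ j ∈ J, y j) ^ 2) / #P := by
          rw [expect_eq_sum_div_card, mul_sum, sum_congr rfl fun J hJ => by rw [hdev J hJ]]
          simp_rw [neg_sq, mul_pow]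
      _ ≤ (k : ℝ)⁻¹ ^ 2 * ((n - 1).choose (k - 1) * n) / #P := by
          gcongr
          exact (sum_powersetCard_sq_sum_le hy hk).trans (by gcongr)
      _ = (k : ℝ)⁻¹ := by rw [hcount]; field_simp
  rw [← Real.sqrt_inv]
  refine Real.le_sqrt_of_sq_le ((?_ : _ ≤ 𝔼 J ∈ P, sampleDev x J ^ 2).trans hsq)
  simpa [expect_const hP] using expect_mul_sq_le_sq_mul_sq P (fun J => |sampleDev x J|) 1

end Sampling

lemma sub_le_sum_abs {κ : Type*} [Fintype κ] (f : κ → ℝ) (a b : κ) : f a - f b ≤ ∑ c, |f c| := by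
  classical
  rcases eq_or_ne a b with rfl | hab
  · simpa using sum_nonneg fun c (_ : c ∈ Finset.univ) => abs_nonneg (f c)
  calc f a - f b ≤ |f a| + |f b| := by linarith [le_abs_self (f a), neg_abs_le (f b)]
    _ = ∑ c ∈ {a, b}, |f c| := (Finset.sum_pair (f := fun c => |f c|) hab).symm
    _ ≤ ∑ c, |f c| := sum_le_sum_of_subset_of_nonneg (subset_univ _) fun c _ _ => abs_nonneg _

lemma expect_expect_le_of_sum_sample_le {ρ κ ι : Type*} [Fintype ρ] [Fintype κ] [Fintype ι]
    (x : ρ → κ → ι → ℝ) (J : Finset ι) {S S' : ρ → κ}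
    (hopt : ∑ i, ∑ j ∈ J, x i (S i) j ≤ ∑ i, ∑ j ∈ J, x i (S' i) j) :
    𝔼 i, 𝔼 j, x i (S i) j ≤ 𝔼 i, 𝔼 j, x i (S' i) j + 𝔼 i, ∑ a, |sampleDev (x i a) J| := by
  have hsplit : ∀ a : ρ → κ, 𝔼 i, 𝔼 j, x i (a i) j
      = 𝔼 i, sampleDev (x i (a i)) J + 𝔼 i, 𝔼 j ∈ J, x i (a i) j := fun a => by
    simp [sampleDev, ← expect_add_distrib]
  have hsample : 𝔼 i, 𝔼 j ∈ J, x i (S i) j ≤ 𝔼 i, 𝔼 j ∈ J, x i (S' i) j := by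
    simp_rw [expect_eq_sum_div_card (s := J), Fintype.expect_eq_sum_div_card, ← sum_div]
    gcongr
  have hdev : 𝔼 i, sampleDev (x i (S i)) J
      ≤ 𝔼 i, sampleDev (x i (S' i)) J + 𝔼 i, ∑ a, |sampleDev (x i a) J| := by
    rw [← expect_add_distrib]
    exact expect_le_expect fun i _ => by
      linarith [sub_le_sum_abs (fun a => sampleDev (x i a) J) (S i) (S' i)]
  rw [hsplit S, hsplit S']
  linarith

lemma expect_expect_sum_abs_sampleDev_le {ρ κ ι : Type*} [Fintype ρ] [Nonempty ρ] [Fintype κ]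
    [Fintype ι] {x : ρ → κ → ι → ℝ} (hx : ∀ i a j, |x i a j| ≤ 1) {k : ℕ} (hk : 1 ≤ k) :
    𝔼 J ∈ powersetCard k univ, 𝔼 i, ∑ a, |sampleDev (x i a) J| ≤ Fintype.card κ * (√k)⁻¹ := by
  rw [expect_comm]
  refine expect_le univ_nonempty fun i _ => ?_
  rw [expect_sum_comm]
  calc ∑ a, 𝔼 J ∈ powersetCard k univ, |sampleDev (x i a) J| ≤ ∑ _a : κ, (√k)⁻¹ :=
        sum_le_sum fun a _ => expect_abs_sampleDev_le (hx i a) hk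
    _ = Fintype.card κ * (√k)⁻¹ := by simp

lemma sSup_exists_mem_eq_iSup {α β γ : Type*} [SupSet γ] (A : Set α) (B : Set β) (F : α → β → γ) :
    sSup {v | ∃ a ∈ A, ∃ b ∈ B, v = F a b} = ⨆ q : A × B, F q.1 q.2 := by
  congr 1
  ext v
  simp [eq_comm]

section Integrability

variable {Ω : Type*} [MeasurableSpace Ω]

lemma integrable_iSup_of_abs_le {ι : Type*} [Finite ι] [Nonempty ι] {P : Measure Ω}
    [IsFiniteMeasure P] {F : ι → Ω → ℝ} (hF : ∀ i, Measurable (F i)) {C : ℝ}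
    (hC : ∀ i ω, |F i ω| ≤ C) :
    Integrable (fun ω => ⨆ i, F i ω) P := by
  refine .of_bound (Measurable.iSup hF).aestronglyMeasurable C (ae_of_all _ fun ω => ?_)
  obtain ⟨i⟩ := ‹Nonempty ι›
  rw [Real.norm_eq_abs, abs_le]
  exact ⟨(abs_le.1 (hC i ω)).1.trans (Finite.le_ciSup (fun i => F i ω) i),
    ciSup_le fun i => (abs_le.1 (hC i ω)).2⟩

lemma integrable_expect {ι : Type*} {P : Measure Ω} (s : Finset ι) {f : ι → Ω → ℝ}
    (hf : ∀ i ∈ s, Integrable (f i) P) : Integrable (fun ω => 𝔼 i ∈ s, f i ω) P := by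
  simp_rw [expect_eq_sum_div_card]
  exact (integrable_finsetSum s hf).div_const _

lemma integral_expect {ι : Type*} {P : Measure Ω} (s : Finset ι) {f : ι → Ω → ℝ}
    (hf : ∀ i ∈ s, Integrable (f i) P) : ∫ ω, 𝔼 i ∈ s, f i ω ∂P = 𝔼 i ∈ s, ∫ ω, f i ω ∂P := by
  simp_rw [expect_eq_sum_div_card]
  rw [integral_div, integral_finsetSum s hf]

lemma integral_le_inv_mul_sum_sum_add {ι κ : Type*} {P : Measure Ω} [IsProbabilityMeasure P]
    (s : Finset ι) (t : Finset κ) {f : Ω → ℝ} {g : ι → κ → Ω → ℝ} (hf : Integrable f P)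
    (hg : ∀ i j, Integrable (g i j) P) {c : ℝ} (h : ∀ ω, f ω ≤ 𝔼 i ∈ s, 𝔼 j ∈ t, g i j ω + c) :
    ∫ ω, f ω ∂P ≤ (#s * #t : ℝ)⁻¹ * ∑ i ∈ s, ∑ j ∈ t, ∫ ω, g i j ω ∂P + c := by
  have hint : ∀ i, Integrable (fun ω => 𝔼 j ∈ t, g i j ω) P := fun i =>
    integrable_expect _ fun j _ => hg i j
  calc ∫ ω, f ω ∂P ≤ ∫ ω, (𝔼 i ∈ s, 𝔼 j ∈ t, g i j ω + c) ∂P :=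
        integral_mono hf ((integrable_expect _ fun i _ => hint i).add (integrable_const _)) h
    _ = _ := by
        rw [integral_add (integrable_expect _ fun i _ => hint i) (integrable_const _),
          integral_const, integral_expect _ fun i _ => hint i]
        simp_rw [integral_expect _ fun j _ => hg _ j, expect_eq_sum_div_card, ← sum_div]
        simp [div_eq_inv_mul, mul_comm, mul_assoc]

end Integrability

lemma mul_inv_sqrt_add_le (K a b : ℕ) :
    K * (√a)⁻¹ + K * (√b)⁻¹
      ≤ K * √(2 * Real.pi) * ((a : ℝ) ^ (-(1/2 : ℝ)) + (b : ℝ) ^ (-(1/2 : ℝ))) := by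
  have hrpow : ∀ k : ℕ, (k : ℝ) ^ (-(1/2 : ℝ)) = (√k)⁻¹ := fun k => by
    rw [Real.sqrt_eq_rpow, Real.rpow_neg (Nat.cast_nonneg k)]
  have h2π : 1 ≤ √(2 * Real.pi) := Real.one_le_sqrt.2 (by nlinarith [Real.pi_gt_three])
  rw [hrpow, hrpow]
  nlinarith [mul_le_mul_of_nonneg_right h2π (by positivity : (0:ℝ) ≤ K * ((√a)⁻¹ + (√b)⁻¹))]

namespace CoCluster

variable {m n K : ℕ}

lemma abs_wrand_mul_le_one {ω : ℝ → ℝ → ℝ} (hω : ∀ x y, ω x y ∈ Set.Icc (0:ℝ) 1)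
    {Γ : Fin K → Fin K → ℝ} (hΓ : ∀ a b, Γ a b ∈ Set.Icc (-1:ℝ) 1) (p : Sample m n) (i : Fin m)
    (j : Fin n) (a b : Fin K) : |Wrand ω p i j * Γ a b| ≤ 1 := by
  have hW := hω (p.1 i) (p.2.1 j)
  rw [abs_mul]
  exact mul_le_one₀ (abs_le.2 ⟨by simp only [Wrand]; linarith [hW.1], hW.2⟩) (abs_nonneg _)
    (abs_le.2 (hΓ a b))

lemma matInner_quotM (Γ : Fin K → Fin K → ℝ) (W : Fin m → Fin n → ℝ) (S : Fin m → Fin K)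
    (T : Fin n → Fin K) :
    matInner Γ (quotM W S T) = 𝔼 i, 𝔼 j, W i j * Γ (S i) (T j) := by
  have hcell : ∀ i j, ∑ a, ∑ b, (if S i = a ∧ T j = b then W i j else 0) * Γ a b
      = W i j * Γ (S i) (T j) := fun i j => by
    simp [ite_and]
  simp only [matInner, quotM, Fintype.expect_eq_sum_div_card, Fintype.card_fin, ← hcell, sum_div,
    mul_sum]
  simp_rw [← Fintype.sum_prod_type']
  -- reindex `(a, b, i, j) ↦ (i, j, a, b)`
  refine Fintype.sum_equiv ((Equiv.prodAssoc _ _ _).symm.trans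
    ((Equiv.prodComm _ _).trans (Equiv.prodAssoc _ _ _))) _ _ fun x => ?_
  simp only [Equiv.trans_apply, Equiv.prodAssoc_apply, Equiv.prodComm_apply,
    Equiv.prodAssoc_symm_apply, Prod.swap]
  field_simp

lemma abs_matInner_quotM_le {Γ : Fin K → Fin K → ℝ} {W : Fin m → Fin n → ℝ}
    (hWΓ : ∀ i j a b, |W i j * Γ a b| ≤ 1) (S : Fin m → Fin K) (T : Fin n → Fin K) :
    |matInner Γ (quotM W S T)| ≤ 1 := by
  rw [matInner_quotM]
  refine (abs_expect_le _ _).trans ?_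
  obtain _ | _ := isEmpty_or_nonempty (Fin m)
  · simp
  refine expect_le univ_nonempty fun i _ => (abs_expect_le _ _).trans ?_
  obtain _ | _ := isEmpty_or_nonempty (Fin n)
  · simp
  exact expect_le univ_nonempty fun j _ => hWΓ i j _ _

lemma matInner_quotM_le_add_sampleDev (W : Fin m → Fin n → ℝ) (Γ : Fin K → Fin K → ℝ)
    {S S' : Fin m → Fin K} {T T' : Fin n → Fin K} {I : Finset (Fin m)} {J : Finset (Fin n)}
    (hS : ∑ i, ∑ j ∈ J, W i j * Γ (S i) (T j) ≤ ∑ i, ∑ j ∈ J, W i j * Γ (S' i) (T j))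
    (hT : ∑ i ∈ I, ∑ j, W i j * Γ (S' i) (T j) ≤ ∑ i ∈ I, ∑ j, W i j * Γ (S' i) (T' j)) :
    matInner Γ (quotM W S T) ≤ matInner Γ (quotM W S' T')
      + 𝔼 i, ∑ a, |sampleDev (fun j => W i j * Γ a (T j)) J|
      + 𝔼 j, ∑ b, |sampleDev (fun i => W i j * Γ (S' i) b) I| := by
  have hrow := expect_expect_le_of_sum_sample_le (fun i a j => W i j * Γ a (T j)) J hS
  have hcol := expect_expect_le_of_sum_sample_le (fun j b i => W i j * Γ (S' i) b) I
    (S := T) (S' := T') (by simpa only [sum_comm (s := I)] using hT)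
  rw [matInner_quotM, matInner_quotM]
  rw [expect_comm] at hcol
  linarith [expect_comm (univ : Finset (Fin m)) univ fun i j => W i j * Γ (S' i) (T' j)]

lemma qmSet_nonempty {μ : Fin K → ℝ} (hμ : μ ∈ OmegaSet m K) : (QmSet m μ).Nonempty := by
  obtain ⟨hsum, hk⟩ := hμ
  choose k hk using hk
  simp_rw [hk, ← sum_div] at hsum
  have hm : (m : ℝ) ≠ 0 := fun h => by simp [h] at hsum
  have hkm : Fintype.card (Σ a, Fin (k a)) = m := by
    simpa using (by exact_mod_cast (div_eq_one_iff_eq hm).1 hsum : ∑ a, k a = m)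
  let e := (Fintype.equivFinOfCardEq hkm).symm
  refine ⟨fun i => (e i).1, fun a => ?_⟩
  rw [card_equiv e (t := {s | s.1 = a}) (by simp),
    show ({s | s.1 = a} : Finset (Σ b, Fin (k b))) = ({a} : Finset (Fin K)).sigma fun _ => univ by
      ext ⟨b, x⟩; simp]
  simp [hk a, mul_div_cancel₀ _ hm]

lemma suppFn_fMat_eq_iSup (Γ : Fin K → Fin K → ℝ) (W : Fin m → Fin n → ℝ) (μ ν : Fin K → ℝ) :
    suppFn (FMat W μ ν) Γ = ⨆ q : QmSet m μ × QmSet n ν, matInner Γ (quotM W q.1 q.2) := by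
  rw [suppFn, ← sSup_exists_mem_eq_iSup _ _ fun S T => matInner Γ (quotM W S T)]
  congr 1
  ext v
  simp only [FMat, Set.mem_image, Set.mem_ofPred_eq]
  aesop

lemma suppFn_fMat_le {W : Fin m → Fin n → ℝ} {Γ : Fin K → Fin K → ℝ}
    (hWΓ : ∀ i j a b, |W i j * Γ a b| ≤ 1) {μ ν : Fin K → ℝ}
    {kI kJ : ℕ} (hkI : 1 ≤ kI) (hkI' : kI ≤ m) (hkJ : 1 ≤ kJ) (hkJ' : kJ ≤ n)
    (Shat : Finset (Fin n) → (Fin n → Fin K) → Fin m → Fin K)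
    (That : Finset (Fin m) → (Fin m → Fin K) → Fin n → Fin K)
    (hSopt : ∀ J R, ∀ S ∈ QmSet m μ,
      ∑ i, ∑ j ∈ J, W i j * Γ (S i) (R j) ≤ ∑ i, ∑ j ∈ J, W i j * Γ (Shat J R i) (R j))
    (hTopt : ∀ I Q, ∀ T ∈ QmSet n ν,
      ∑ i ∈ I, ∑ j, W i j * Γ (Q i) (T j) ≤ ∑ i ∈ I, ∑ j, W i j * Γ (Q i) (That I Q j))
    [Nonempty (QmSet m μ × QmSet n ν)] (g : Finset (Fin m) → Finset (Fin n) → ℝ)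
    (hg : ∀ I J, ∀ R ∈ QmSet n ν, matInner Γ (quotM W (Shat J R) (That I (Shat J R))) ≤ g I J) :
    suppFn (FMat W μ ν) Γ
      ≤ 𝔼 I ∈ powersetCard kI univ, 𝔼 J ∈ powersetCard kJ univ, g I J
        + (K * (√kI)⁻¹ + K * (√kJ)⁻¹) := by
  have : NeZero m := ⟨by omega⟩
  have : NeZero n := ⟨by omega⟩
  have hPI : (powersetCard kI (univ : Finset (Fin m))).Nonempty :=
    powersetCard_nonempty.2 (by simpa)
  have hPJ : (powersetCard kJ (univ : Finset (Fin n))).Nonempty :=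
    powersetCard_nonempty.2 (by simpa)
  rw [suppFn_fMat_eq_iSup]
  refine ciSup_le fun ⟨⟨S, hS⟩, ⟨T, hT⟩⟩ => ?_
  set e₁ := fun J => 𝔼 i, ∑ a, |sampleDev (fun j => W i j * Γ a (T j)) J|
  set e₂ := fun I J => 𝔼 j, ∑ b, |sampleDev (fun i => W i j * Γ (Shat J T i) b) I|
  have hpt : ∀ I J, matInner Γ (quotM W S T) ≤ g I J + e₁ J + e₂ I J := fun I J =>
    (matInner_quotM_le_add_sampleDev W Γ (hSopt J T S hS) (hTopt I (Shat J T) T hT)).trans <| by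
      gcongr
      exact hg I J T hT
  have he₁ : 𝔼 J ∈ powersetCard kJ univ, e₁ J ≤ K * (√kJ)⁻¹ := by
    simpa using expect_expect_sum_abs_sampleDev_le (x := fun i a j => W i j * Γ a (T j))
      (fun i a j => hWΓ i j a (T j)) hkJ
  have he₂ : ∀ J, 𝔼 I ∈ powersetCard kI univ, e₂ I J ≤ K * (√kI)⁻¹ := fun J => by
    simpa using expect_expect_sum_abs_sampleDev_le (x := fun j b i => W i j * Γ (Shat J T i) b)
      (fun j b i => hWΓ i j (Shat J T i) b) hkI
  calc matInner Γ (quotM W S T)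
      = 𝔼 I ∈ powersetCard kI univ, 𝔼 J ∈ powersetCard kJ univ, matInner Γ (quotM W S T) := by
        rw [expect_const hPJ, expect_const hPI]
    _ ≤ 𝔼 I ∈ powersetCard kI univ, 𝔼 J ∈ powersetCard kJ univ, (g I J + e₁ J + e₂ I J) :=
        expect_le_expect fun I _ => expect_le_expect fun J _ => hpt I J
    _ = 𝔼 I ∈ powersetCard kI univ, 𝔼 J ∈ powersetCard kJ univ, g I J
          + 𝔼 J ∈ powersetCard kJ univ, e₁ J
          + 𝔼 J ∈ powersetCard kJ univ, 𝔼 I ∈ powersetCard kI univ, e₂ I J := by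
        simp_rw [expect_add_distrib]
        rw [expect_const hPI, expect_comm _ _ e₂]
    _ ≤ _ := by
        have := expect_le hPJ fun J _ => he₂ J
        linarith

lemma measurable_matInner_quotM_wrand {ω : ℝ → ℝ → ℝ} (hω : Measurable fun q : ℝ × ℝ => ω q.1 q.2)
    (Γ : Fin K → Fin K → ℝ) {S : Sample m n → Fin m → Fin K} {T : Sample m n → Fin n → Fin K}
    (hS : Measurable S) (hT : Measurable T) :
    Measurable fun p => matInner Γ (quotM (Wrand ω p) (S p) (T p)) := by
  have hW : ∀ i j, Measurable fun p : Sample m n => Wrand ω p i j := fun i j =>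
    hω.comp (f := fun p : Sample m n => (p.1 i, p.2.1 j)) (by fun_prop)
  have hST : Measurable fun x : Sample m n × ((Fin m → Fin K) × (Fin n → Fin K)) =>
      matInner Γ (quotM (Wrand ω x.1) x.2.1 x.2.2) :=
    measurable_from_prod_countable_left fun ST => by
      simp only [matInner_quotM, Fintype.expect_eq_sum_div_card]
      fun_prop
  exact hST.comp (f := fun p => (p, S p, T p)) (measurable_id.prodMk (hS.prodMk hT))

end CoCluster

theorem stmt13_general (K m n : ℕ)
    (ω : ℝ → ℝ → ℝ)
    (hmeas : Measurable fun q : ℝ × ℝ => ω q.1 q.2)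
    (hbd : ∀ x y, ω x y ∈ Set.Icc (0:ℝ) 1)
    (Γ : Fin K → Fin K → ℝ) (hΓ : ∀ a b, Γ a b ∈ Set.Icc (-1:ℝ) 1)
    (μ : Fin K → ℝ) (hμ : μ ∈ OmegaSet m K)
    (ν : Fin K → ℝ) (hν : ν ∈ OmegaSet n K)
    (kI kJ : ℕ) (hkI : 1 ≤ kI) (hkI' : kI ≤ m) (hkJ : 1 ≤ kJ) (hkJ' : kJ ≤ n)
    (Shat : Finset (Fin n) → (Fin n → Fin K) → Sample m n → (Fin m → Fin K))
    (That : Finset (Fin m) → (Fin m → Fin K) → Sample m n → (Fin n → Fin K))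
    (hSmem : ∀ J R p, Shat J R p ∈ QmSet m μ)
    (hSopt : ∀ J R p, ∀ S ∈ QmSet m μ,
      (∑ i, ∑ j ∈ J, Wrand ω p i j * Γ (S i) (R j))
        ≤ ∑ i, ∑ j ∈ J, Wrand ω p i j * Γ (Shat J R p i) (R j))
    (hTopt : ∀ I Q p, ∀ T ∈ QmSet n ν,
      (∑ i ∈ I, ∑ j, Wrand ω p i j * Γ (Q i) (T j))
        ≤ ∑ i ∈ I, ∑ j, Wrand ω p i j * Γ (Q i) (That I Q p j))
    (hSmeas : ∀ J R, Measurable (Shat J R))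
    (hTmeas : ∀ I Q, Measurable (That I Q)) :
    (∫ p, suppFn (FMat (Wrand ω p) μ ν) Γ ∂(pspace m n))
      ≤ (((Finset.powersetCard kI (Finset.univ : Finset (Fin m))).card *
            (Finset.powersetCard kJ (Finset.univ : Finset (Fin n))).card : ℝ))⁻¹ *
          (∑ I ∈ Finset.powersetCard kI (Finset.univ : Finset (Fin m)),
            ∑ J ∈ Finset.powersetCard kJ (Finset.univ : Finset (Fin n)),
              ∫ p, sSup {v : ℝ | ∃ Q ∈ QmSet m μ, ∃ R ∈ QmSet n ν,
                  v = matInner Γ (quotM (Wrand ω p) (Shat J R p) (That I Q p))}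
                ∂(pspace m n))
        + K * Real.sqrt (2 * Real.pi) *
            ((kI : ℝ) ^ (-(1/2 : ℝ)) + (kJ : ℝ) ^ (-(1/2 : ℝ))) := by
  have : IsProbabilityMeasure (pspace m n) := by unfold pspace; infer_instance
  have : Nonempty (QmSet m μ × QmSet n ν) :=
    ⟨⟨_, (qmSet_nonempty hμ).some_mem⟩, ⟨_, (qmSet_nonempty hν).some_mem⟩⟩
  have hWΓ := abs_wrand_mul_le_one (m := m) (n := n) hbd hΓ
  set g := fun I J p => ⨆ q : QmSet m μ × QmSet n ν,
    matInner Γ (quotM (Wrand ω p) (Shat J q.2 p) (That I q.1 p))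
  have hg : ∀ I J, Integrable (g I J) (pspace m n) := fun I J =>
    integrable_iSup_of_abs_le (fun q => measurable_matInner_quotM_wrand hmeas Γ
      (hSmeas J q.2) (hTmeas I q.1)) fun q p => abs_matInner_quotM_le (hWΓ p) _ _
  have hsupp : Integrable (fun p => suppFn (FMat (Wrand ω p) μ ν) Γ) (pspace m n) := by
    simp_rw [suppFn_fMat_eq_iSup]
    exact integrable_iSup_of_abs_le (fun q => measurable_matInner_quotM_wrand hmeas Γ
      measurable_const measurable_const) fun q p => abs_matInner_quotM_le (hWΓ p) _ _
  have hpt : ∀ p, suppFn (FMat (Wrand ω p) μ ν) Γ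
      ≤ 𝔼 I ∈ powersetCard kI univ, 𝔼 J ∈ powersetCard kJ univ, g I J p
        + (K * (√kI)⁻¹ + K * (√kJ)⁻¹) := fun p =>
    suppFn_fMat_le (hWΓ p) hkI hkI' hkJ hkJ' (Shat · · p) (That · · p) (hSopt · · p)
      (hTopt · · p) (fun I J => g I J p) fun I J R hR =>
        Finite.le_ciSup (fun q : QmSet m μ × QmSet n ν =>
          matInner Γ (quotM (Wrand ω p) (Shat J q.2 p) (That I q.1 p))) (⟨_, hSmem J R p⟩, ⟨R, hR⟩)
  simp_rw [sSup_exists_mem_eq_iSup]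
  exact (integral_le_inv_mul_sum_sum_add _ _ hsupp hg hpt).trans
    (add_le_add_right (mul_inv_sqrt_add_le K kI kJ) _)

/-- Lemma 5.5.  Let `W_{ij} = ω(ξ_i,ζ_j)`, let `I ⊂ {1,…,m}`
and `J ⊂ {1,…,n}` be uniformly random subsets of deterministic sizes
`kI, kJ ≥ 1`, sampled without replacement and independent of `(ξ,ζ)` (the
expectation over them is written as an average over all subsets of the given
sizes).  For `(Q,R) ∈ Q_μ^m × Q_ν^n`, let `Ŝ^R` and `T̂^Q` be measurably chosen
maximizers as displayed.  Then
`E[h_{F^W}(Γ)] ≤ E[max_{(Q,R)} ⟨Γ, W/Ŝ^R T̂^Q⟩] + K√(2π)(kI^{−1/2} + kJ^{−1/2})`. -/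
theorem stmt13 (K m n : ℕ) [NeZero K] (hm : 0 < m) (hn : 0 < n)
    (ω : ℝ → ℝ → ℝ)
    (hmeas : Measurable fun q : ℝ × ℝ => ω q.1 q.2)
    (hbd : ∀ x y, ω x y ∈ Set.Icc (0:ℝ) 1)
    (Γ : Fin K → Fin K → ℝ) (hΓ : ∀ a b, Γ a b ∈ Set.Icc (-1:ℝ) 1)
    (μ : Fin K → ℝ) (hμ : μ ∈ OmegaSet m K)
    (ν : Fin K → ℝ) (hν : ν ∈ OmegaSet n K)
    (kI kJ : ℕ) (hkI : 1 ≤ kI) (hkI' : kI ≤ m) (hkJ : 1 ≤ kJ) (hkJ' : kJ ≤ n)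
    (Shat : Finset (Fin n) → (Fin n → Fin K) → Sample m n → (Fin m → Fin K))
    (That : Finset (Fin m) → (Fin m → Fin K) → Sample m n → (Fin n → Fin K))
    (hSmem : ∀ J R p, Shat J R p ∈ QmSet m μ)
    (hSopt : ∀ J R p, ∀ S ∈ QmSet m μ,
      (∑ i, ∑ j ∈ J, Wrand ω p i j * Γ (S i) (R j))
        ≤ ∑ i, ∑ j ∈ J, Wrand ω p i j * Γ (Shat J R p i) (R j))
    (hTmem : ∀ I Q p, That I Q p ∈ QmSet n ν)
    (hTopt : ∀ I Q p, ∀ T ∈ QmSet n ν,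
      (∑ i ∈ I, ∑ j, Wrand ω p i j * Γ (Q i) (T j))
        ≤ ∑ i ∈ I, ∑ j, Wrand ω p i j * Γ (Q i) (That I Q p j))
    (hSmeas : ∀ J R, Measurable (Shat J R))
    (hTmeas : ∀ I Q, Measurable (That I Q)) :
    (∫ p, suppFn (FMat (Wrand ω p) μ ν) Γ ∂(pspace m n))
      ≤ (((Finset.powersetCard kI (Finset.univ : Finset (Fin m))).card *
            (Finset.powersetCard kJ (Finset.univ : Finset (Fin n))).card : ℝ))⁻¹ *
          (∑ I ∈ Finset.powersetCard kI (Finset.univ : Finset (Fin m)),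
            ∑ J ∈ Finset.powersetCard kJ (Finset.univ : Finset (Fin n)),
              ∫ p, sSup {v : ℝ | ∃ Q ∈ QmSet m μ, ∃ R ∈ QmSet n ν,
                  v = matInner Γ (quotM (Wrand ω p) (Shat J R p) (That I Q p))}
                ∂(pspace m n))
        + K * Real.sqrt (2 * Real.pi) *
            ((kI : ℝ) ^ (-(1/2 : ℝ)) + (kJ : ℝ) ^ (-(1/2 : ℝ))) :=
  stmt13_general K m n ω hmeas hbd Γ hΓ μ hμ ν hν kI kJ hkI hkI' hkJ hkJ' Shat That hSmem hSopt
    hTopt hSmeas hTmeas
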